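/- arXiv:1407.5783 — 2 statements merged into one kernel-verified Lean document; each statement's English description precedes it below -/
import Mathlib

section
/- (Theorem 1.) The functions f(·; ε) and g are increasing in x on the set of CCDF vectors: for all x, x' ∈ ℝ^m with 1 ≥ x_1 ≥ x_2 ≥ … ≥ x_m ≥ 0, 1 ≥ x'_1 ≥ x'_2 ≥ … ≥ x'_m ≥ 0 and x_i ≤ x'_i for all i, one has f(x; ε)_i ≤ f(x'; ε)_i and g(x)_i ≤ g(x')_i for all 1 ≤ i ≤ m. -/
open scoped BigOperators

noncomputable section

/-- Number of `j`-dimensional subspaces `U` of `𝔽₂^m` whose intersection with `W`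
has dimension `k`. -/
def numInter (m j k : ℕ) (W : Submodule (ZMod 2) (Fin m → ZMod 2)) : ℕ :=
  Set.ncard {U : Submodule (ZMod 2) (Fin m → ZMod 2) |
    Module.finrank (ZMod 2) U = j ∧ Module.finrank (ZMod 2) ↥(U ⊓ W) = k}

/-- Number of `j`-dimensional subspaces `U` of `𝔽₂^m` whose sum with `W`
has dimension `k`. -/
def numSum (m j k : ℕ) (W : Submodule (ZMod 2) (Fin m → ZMod 2)) : ℕ :=
  Set.ncard {U : Submodule (ZMod 2) (Fin m → ZMod 2) |
    Module.finrank (ZMod 2) U = j ∧ Module.finrank (ZMod 2) ↥(U ⊔ W) = k}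

/-- Number of `j`-dimensional subspaces of `𝔽₂^m`. -/
def numDim (m j : ℕ) : ℕ :=
  Set.ncard {U : Submodule (ZMod 2) (Fin m → ZMod 2) | Module.finrank (ZMod 2) U = j}

/-- A canonical `i`-dimensional subspace of `𝔽₂^m` (for `i ≤ m`): vectors supported on
the first `i` coordinates. -/
def stdW (m i : ℕ) : Submodule (ZMod 2) (Fin m → ZMod 2) :=
  Submodule.span (ZMod 2) {x | ∀ t : Fin m, i ≤ (t : ℕ) → x t = 0}

/-- `V^m_{i,j,k}`: probability that a uniformly random `j`-dimensional subspace `U`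
of `𝔽₂^m` satisfies `dim (U ⊓ W) = k`, for a fixed `i`-dimensional subspace `W`. -/
def Vprob (m i j k : ℕ) : ℝ := (numInter m j k (stdW m i) : ℝ) / (numDim m j : ℝ)

/-- `C^m_{i,j,k}`: probability that a uniformly random `j`-dimensional subspace `U`
of `𝔽₂^m` satisfies `dim (U ⊔ W) = k`, for a fixed `i`-dimensional subspace `W`. -/
def Cprob (m i j k : ℕ) : ℝ := (numSum m j k (stdW m i) : ℝ) / (numDim m j : ℝ)

/-- The operation `⊡`. -/
def boxdot (m : ℕ) (a b : Fin (m+1) → ℝ) : Fin (m+1) → ℝ :=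
  fun k => ∑ i : Fin (m+1), ∑ j : Fin (m+1), Vprob m i j k * a i * b j

/-- The operation `⊠`. -/
def boxtimes (m : ℕ) (a b : Fin (m+1) → ℝ) : Fin (m+1) → ℝ :=
  fun k => ∑ i : Fin (m+1), ∑ j : Fin (m+1), Cprob m i j k * a i * b j

/-- `boxdotPow m n a = ⊡^{n+1} a` (the `(n+1)`-fold `⊡`-product of `a` with itself). -/
def boxdotPow (m : ℕ) : ℕ → (Fin (m+1) → ℝ) → (Fin (m+1) → ℝ)
  | 0, a => a
  | n+1, a => boxdot m a (boxdotPow m n a)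

/-- `boxtimesPow m n a = ⊠^{n+1} a` (the `(n+1)`-fold `⊠`-product of `a` with itself). -/
def boxtimesPow (m : ℕ) : ℕ → (Fin (m+1) → ℝ) → (Fin (m+1) → ℝ)
  | 0, a => a
  | n+1, a => boxtimes m a (boxtimesPow m n a)

/-- `p∘(ε)`. -/
def pcirc (m : ℕ) (ε : ℝ) : Fin (m+1) → ℝ :=
  fun i => (m.choose i : ℝ) * ε ^ (i : ℕ) * (1 - ε) ^ (m - (i : ℕ))

/-- `f∘(y∘; ε) = p∘(ε) ⊡ (⊡^{d_v − 1} y∘)`. -/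
def fcirc (m dv : ℕ) (ε : ℝ) (y : Fin (m+1) → ℝ) : Fin (m+1) → ℝ :=
  boxdot m (pcirc m ε) (boxdotPow m (dv - 2) y)

/-- `g∘(x∘) = ⊠^{d_c − 1} x∘`. -/
def gcirc (m dc : ℕ) (x : Fin (m+1) → ℝ) : Fin (m+1) → ℝ :=
  boxtimesPow m (dc - 2) x

/-- Extension of `x ∈ ℝ^m` (indexed `1,…,m`) to `ℕ` with conventions `x_0 = 1`,
`x_i = 0` for `i > m`. -/
def extSeq (m : ℕ) (x : Fin m → ℝ) : ℕ → ℝ :=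
  fun i => if _h0 : i = 0 then 1 else if h : i ≤ m then x ⟨i - 1, by omega⟩ else 0

/-- `x̃ ∈ ℝ^{m+1}` with `x̃_i = x_i − x_{i+1}`. -/
def tilde (m : ℕ) (x : Fin m → ℝ) : Fin (m+1) → ℝ :=
  fun i => extSeq m x i - extSeq m x ((i : ℕ) + 1)

/-- `f(y; ε)_i = Σ_{k=i}^m f∘(ỹ; ε)_k` (here `i : Fin m` denotes the index `i+1 ∈ {1,…,m}`). -/
def fFun (m dv : ℕ) (ε : ℝ) (y : Fin m → ℝ) : Fin m → ℝ :=
  fun i => ∑ k : Fin (m+1), if (i : ℕ) + 1 ≤ (k : ℕ) then fcirc m dv ε (tilde m y) k else 0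

/-- `g(x)_i = Σ_{k=i}^m g∘(x̃)_k`. -/
def gFun (m dc : ℕ) (x : Fin m → ℝ) : Fin m → ℝ :=
  fun i => ∑ k : Fin (m+1), if (i : ℕ) + 1 ≤ (k : ℕ) then gcirc m dc (tilde m x) k else 0

/-- `p(ε)_i = Σ_{k=i}^m p∘_k(ε)`. -/
def pFun (m : ℕ) (ε : ℝ) : Fin m → ℝ :=
  fun i => ∑ k : Fin (m+1), if (i : ℕ) + 1 ≤ (k : ℕ) then pcirc m ε k else 0

/-- `X_ε = {x ∈ ℝ^m : 0 ≤ x_i ≤ p(ε)_i}`. -/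
def Xset (m : ℕ) (ε : ℝ) : Set (Fin m → ℝ) := {x | ∀ i, 0 ≤ x i ∧ x i ≤ pFun m ε i}

/-- `Y = [0,1]^m`. -/
def Yset (m : ℕ) : Set (Fin m → ℝ) := {y | ∀ i, 0 ≤ y i ∧ y i ≤ 1}

/-- The continuous linear map `v ↦ Σ_s c_s v_s`, i.e. the row vector `c` viewed as a
linear functional; used to express gradients. -/
def rowDeriv (m : ℕ) (c : Fin m → ℝ) : (Fin m → ℝ) →L[ℝ] ℝ :=
  ∑ s : Fin m, c s • (ContinuousLinearMap.proj s : (Fin m → ℝ) →L[ℝ] ℝ)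

/-- The potential function `U(x; ε) = g(x) D xᵀ − G(x) − F(g(x); ε)` (with `ε` fixed,
absorbed into `F`). -/
def Upot (m dc : ℕ) (D : Matrix (Fin m) (Fin m) ℝ) (F G : (Fin m → ℝ) → ℝ)
    (x : Fin m → ℝ) : ℝ :=
  (∑ a : Fin m, ∑ b : Fin m, gFun m dc x a * D a b * x b) - G x - F (gFun m dc x)

/-!
Write `a ≤ₜ b` (`TailLE`) when every tail sum `∑_{k ≥ κ} a_k` is at most the corresponding
tail sum of `b`. The tail sums of `x̃` are the entries of `x` (with `x_0 = 1`), so CCDF vectors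
`x ≤ x'` give nonnegative vectors `x̃ ≤ₜ x̃'`; and `f`, `g` are tail sums of iterated `⊡`- and
`⊠`-products. It therefore suffices that both products are monotone for `≤ₜ` on nonnegative
vectors. By Abel summation this holds for every product `∑ K(i,j,k) a_i b_j` whose kernel is
nonnegative with tail sums nondecreasing in `i` and in `j`. For `V` and `C`, monotonicity in `i`
holds because `W ⊆ W'` enlarges both `U ∩ W` and `U + W`; monotonicity in `j` then follows from
the symmetry `V_{i,j,k} = V_{j,i,k}` (and likewise for `C`), which is a double count of pairs
`(U, W)`, given that the counts depend on `W` only through its dimension.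
-/

open Module Submodule Finset

section TailSum

variable {m : ℕ}

def tailSum (m : ℕ) (a : Fin (m + 1) → ℝ) (κ : ℕ) : ℝ :=
  ∑ k : Fin (m + 1), if κ ≤ (k : ℕ) then a k else 0

def TailLE (m : ℕ) (a b : Fin (m + 1) → ℝ) : Prop :=
  ∀ κ, tailSum m a κ ≤ tailSum m b κ

lemma TailLE.refl (a : Fin (m + 1) → ℝ) : TailLE m a a := fun _ => le_rfl

lemma tailSum_of_lt (a : Fin (m + 1) → ℝ) {κ : ℕ} (hκ : m < κ) : tailSum m a κ = 0 :=
  Finset.sum_eq_zero fun k _ => if_neg (by omega)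

lemma tailSum_eq_add (a : Fin (m + 1) → ℝ) {κ : ℕ} (hκ : κ ≤ m) :
    tailSum m a κ = a ⟨κ, Nat.lt_succ_of_le hκ⟩ + tailSum m a (κ + 1) := by
  have hsplit : ∀ k : Fin (m + 1), (if κ ≤ (k : ℕ) then a k else 0) =
      (if ⟨κ, Nat.lt_succ_of_le hκ⟩ = k then a k else 0) + if κ + 1 ≤ (k : ℕ) then a k else 0 :=
    fun k => by
      rcases lt_trichotomy (k : ℕ) κ with h | h | h
      · simp [Fin.ext_iff, h.ne', h.not_ge, show ¬ κ + 1 ≤ (k : ℕ) by omega]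
      · simp [Fin.ext_iff, h]
      · simp [Fin.ext_iff, h.ne, h.le, show κ + 1 ≤ (k : ℕ) by omega]
  rw [tailSum, Finset.sum_congr rfl fun k _ => hsplit k, Finset.sum_add_distrib,
    Finset.sum_ite_eq, if_pos (Finset.mem_univ _), tailSum]

lemma sum_mul_eq_tailSum (u : Fin (m + 1) → ℝ) (c : ℕ → ℝ) :
    ∑ j : Fin (m + 1), u j * c j =
      c 0 * tailSum m u 0 + ∑ l ∈ range m, (c (l + 1) - c l) * tailSum m u (l + 1) := by
  have hc : ∀ j : Fin (m + 1),
      c j = c 0 + ∑ l ∈ range m, if l + 1 ≤ (j : ℕ) then c (l + 1) - c l else 0 := by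
    intro j
    rw [← Finset.sum_filter, show (range m).filter (fun l => l + 1 ≤ (j : ℕ)) = range j by
      ext l; simp only [Finset.mem_filter, Finset.mem_range]; omega, Finset.sum_range_sub]
    ring
  simp only [hc, tailSum, mul_add, Finset.mul_sum, Finset.sum_add_distrib]
  rw [Finset.sum_comm]
  congr 1
  · simp [mul_comm]
  · refine Finset.sum_congr rfl fun l _ => Finset.sum_congr rfl fun j _ => ?_
    split_ifs <;> ring

lemma sum_mul_le_sum_mul_of_tailLE {u v : Fin (m + 1) → ℝ} (huv : TailLE m u v) {c : ℕ → ℝ}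
    (hc0 : 0 ≤ c 0) (hc : ∀ l < m, c l ≤ c (l + 1)) :
    ∑ j : Fin (m + 1), u j * c j ≤ ∑ j : Fin (m + 1), v j * c j := by
  rw [sum_mul_eq_tailSum, sum_mul_eq_tailSum]
  gcongr with l hl
  · exact huv 0
  · exact sub_nonneg.mpr (hc l (Finset.mem_range.mp hl))
  · exact huv (l + 1)

end TailSum

section Kernel

variable {m : ℕ}

def kernelProd (m : ℕ) (K : ℕ → ℕ → ℕ → ℝ) (a b : Fin (m + 1) → ℝ) : Fin (m + 1) → ℝ :=
  fun k => ∑ i : Fin (m + 1), ∑ j : Fin (m + 1), K i j k * a i * b j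

/-- `kernelPow m K n a` is the `(n+1)`-fold product `a * (a * ⋯ (a * a))`. -/
def kernelPow (m : ℕ) (K : ℕ → ℕ → ℕ → ℝ) : ℕ → (Fin (m + 1) → ℝ) → Fin (m + 1) → ℝ
  | 0, a => a
  | n + 1, a => kernelProd m K a (kernelPow m K n a)

structure IsMonotoneKernel (m : ℕ) (K : ℕ → ℕ → ℕ → ℝ) : Prop where
  nonneg : ∀ i j k, 0 ≤ K i j k
  tailSum_mono_left : ∀ i j κ, i < m → j ≤ m →
    tailSum m (fun k => K i j k) κ ≤ tailSum m (fun k => K (i + 1) j k) κ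
  tailSum_mono_right : ∀ i j κ, i ≤ m → j < m →
    tailSum m (fun k => K i j k) κ ≤ tailSum m (fun k => K i (j + 1) k) κ

lemma tailSum_kernelProd (K : ℕ → ℕ → ℕ → ℝ) (a b : Fin (m + 1) → ℝ) (κ : ℕ) :
    tailSum m (kernelProd m K a b) κ =
      ∑ i : Fin (m + 1), a i * ∑ j : Fin (m + 1), b j * tailSum m (fun k => K i j k) κ := by
  simp only [tailSum, kernelProd, Finset.mul_sum, ite_sum_zero]
  rw [Finset.sum_comm]
  refine Finset.sum_congr rfl fun i _ => ?_
  rw [Finset.sum_comm]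
  refine Finset.sum_congr rfl fun j _ => Finset.sum_congr rfl fun _ _ => ?_
  split_ifs <;> ring

namespace IsMonotoneKernel

variable {K : ℕ → ℕ → ℕ → ℝ}

lemma kernelProd_nonneg (hK : IsMonotoneKernel m K) {a b : Fin (m + 1) → ℝ} (ha : 0 ≤ a)
    (hb : 0 ≤ b) : 0 ≤ kernelProd m K a b := fun _ =>
  Finset.sum_nonneg fun i _ => Finset.sum_nonneg fun j _ =>
    mul_nonneg (mul_nonneg (hK.nonneg _ _ _) (ha i)) (hb j)

lemma kernelPow_nonneg (hK : IsMonotoneKernel m K) {a : Fin (m + 1) → ℝ} (ha : 0 ≤ a) (n : ℕ) :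
    0 ≤ kernelPow m K n a := by
  induction n with
  | zero => exact ha
  | succ n ih => exact hK.kernelProd_nonneg ha ih

lemma tailSum_nonneg (hK : IsMonotoneKernel m K) (i j κ : ℕ) : 0 ≤ tailSum m (fun k => K i j k) κ :=
  Finset.sum_nonneg fun _ _ => by split_ifs <;> simp [hK.nonneg]

lemma tailLE_kernelProd (hK : IsMonotoneKernel m K) {a a' b b' : Fin (m + 1) → ℝ} (ha : 0 ≤ a)
    (hb' : 0 ≤ b') (haa' : TailLE m a a') (hbb' : TailLE m b b') :
    TailLE m (kernelProd m K a b) (kernelProd m K a' b') := by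
  intro κ
  rw [tailSum_kernelProd, tailSum_kernelProd]
  calc ∑ i : Fin (m + 1), a i * ∑ j : Fin (m + 1), b j * tailSum m (fun k => K i j k) κ
      ≤ ∑ i : Fin (m + 1), a i * ∑ j : Fin (m + 1), b' j * tailSum m (fun k => K i j k) κ := by
        refine Finset.sum_le_sum fun i _ => mul_le_mul_of_nonneg_left ?_ (ha i)
        exact sum_mul_le_sum_mul_of_tailLE (c := fun l => tailSum m (fun k => K i l k) κ) hbb'
          (hK.tailSum_nonneg _ _ _) fun l hl =>
            hK.tailSum_mono_right _ _ _ (Nat.lt_succ_iff.mp i.2) hl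
    _ ≤ ∑ i : Fin (m + 1), a' i * ∑ j : Fin (m + 1), b' j * tailSum m (fun k => K i j k) κ := by
        refine sum_mul_le_sum_mul_of_tailLE (c := fun l => ∑ j : Fin (m + 1),
          b' j * tailSum m (fun k => K l j k) κ) haa'
          (Finset.sum_nonneg fun j _ => mul_nonneg (hb' j) (hK.tailSum_nonneg _ _ _))
          fun l hl => ?_
        exact Finset.sum_le_sum fun j _ => mul_le_mul_of_nonneg_left
          (hK.tailSum_mono_left _ _ _ hl (Nat.lt_succ_iff.mp j.2)) (hb' j)

lemma tailLE_kernelPow (hK : IsMonotoneKernel m K) {a a' : Fin (m + 1) → ℝ} (ha : 0 ≤ a)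
    (ha' : 0 ≤ a') (haa' : TailLE m a a') (n : ℕ) : TailLE m (kernelPow m K n a) (kernelPow m K n a') := by
  induction n with
  | zero => exact haa'
  | succ n ih => exact hK.tailLE_kernelProd ha (hK.kernelPow_nonneg ha' n) haa' ih

end IsMonotoneKernel

end Kernel

theorem Submodule.exists_linearEquiv_map_eq_of_finrank_eq {K V : Type*} [Field K]
    [AddCommGroup V] [Module K V] [FiniteDimensional K V] {W W' : Submodule K V}
    (h : finrank K W = finrank K W') : ∃ e : V ≃ₗ[K] V, W.map e.toLinearMap = W' := by
  obtain ⟨q, hq⟩ := W.exists_isCompl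
  obtain ⟨q', hq'⟩ := W'.exists_isCompl
  have hq_rank : finrank K q = finrank K q' := by
    have := finrank_add_eq_of_isCompl hq
    have := finrank_add_eq_of_isCompl hq'
    omega
  let eW : W ≃ₗ[K] W' := LinearEquiv.ofFinrankEq _ _ h
  let e : V ≃ₗ[K] V := (prodEquivOfIsCompl W q hq).symm ≪≫ₗ
    (eW.prodCongr (LinearEquiv.ofFinrankEq _ _ hq_rank)) ≪≫ₗ prodEquivOfIsCompl W' q' hq'
  have he : ∀ w : W, e w = eW w := fun w => by simp [e]
  refine ⟨e, le_antisymm ?_ fun w' hw' => ?_⟩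
  · rintro _ ⟨w, hw, rfl⟩
    simp [he ⟨w, hw⟩]
  · obtain ⟨w, hw⟩ := eW.surjective ⟨w', hw'⟩
    exact ⟨w, w.2, by simp [he w, hw]⟩

section Counting

variable {m : ℕ}

local notation "Subsp" => Submodule (ZMod 2) (Fin m → ZMod 2)

def IsGLEquivariant (op : Subsp → Subsp → Subsp) : Prop :=
  ∀ (e : (Fin m → ZMod 2) ≃ₗ[ZMod 2] (Fin m → ZMod 2)) U W,
    op (U.map e.toLinearMap) (W.map e.toLinearMap) = (op U W).map e.toLinearMap

def numOp (op : Subsp → Subsp → Subsp) (j k : ℕ) (W : Subsp) : ℕ :=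
  Set.ncard {U : Subsp | finrank (ZMod 2) U = j ∧ finrank (ZMod 2) (op U W) = k}

open Classical in
def subspacesOfFinrank (j : ℕ) : Finset Subsp := {U | finrank (ZMod 2) U = j}

lemma numOp_eq_sum (op : Subsp → Subsp → Subsp) (j k : ℕ) (W : Subsp) :
    numOp op j k W =
      ∑ U ∈ subspacesOfFinrank j, if finrank (ZMod 2) (op U W) = k then 1 else 0 := by
  classical
  rw [numOp, Set.ncard_eq_toFinset_card', Set.toFinset_ofPred, subspacesOfFinrank,
    ← Finset.filter_filter, Finset.card_filter]

lemma numDim_eq_card (j : ℕ) : numDim m j = #(subspacesOfFinrank (m := m) j) := by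
  classical
  rw [numDim, Set.ncard_eq_toFinset_card', Set.toFinset_ofPred, subspacesOfFinrank]

lemma numOp_congr {op : Subsp → Subsp → Subsp} (hmap : IsGLEquivariant op) {j k : ℕ} {W W' : Subsp} (h : finrank (ZMod 2) W = finrank (ZMod 2) W') :
    numOp op j k W = numOp op j k W' := by
  obtain ⟨e, rfl⟩ := exists_linearEquiv_map_eq_of_finrank_eq h
  have hbij : Function.Bijective (Submodule.map e.toLinearMap) :=
    ⟨map_injective_of_injective e.injective, map_surjective_of_surjective e.surjective⟩
  rw [numOp, numOp, eq_comm,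
    ← Set.ncard_preimage_of_injective_subset_range hbij.1 fun U _ => hbij.2 U]
  congr 1
  ext U
  simp only [Set.mem_preimage, Set.mem_ofPred_eq]
  rw [hmap, LinearEquiv.finrank_map_eq, LinearEquiv.finrank_map_eq]

def extByZero (m i : ℕ) : (Fin i → ZMod 2) →ₗ[ZMod 2] (Fin m → ZMod 2) where
  toFun y t := if h : (t : ℕ) < i then y ⟨t, h⟩ else 0
  map_add' a b := by funext t; by_cases h : (t : ℕ) < i <;> simp [h]
  map_smul' c a := by funext t; by_cases h : (t : ℕ) < i <;> simp [h]

lemma stdW_eq_range {i : ℕ} (him : i ≤ m) : stdW m i = LinearMap.range (extByZero m i) := by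
  refine le_antisymm (span_le.mpr fun x hx => ⟨fun s => x ⟨s, s.2.trans_le him⟩, ?_⟩) ?_
  · funext t
    by_cases h : (t : ℕ) < i
    · simp [extByZero, h]
    · simp [extByZero, h, hx t (by omega)]
  · rintro _ ⟨y, rfl⟩
    exact subset_span fun t ht => by simp [extByZero, Nat.not_lt.mpr ht]

lemma finrank_stdW {i : ℕ} (him : i ≤ m) : finrank (ZMod 2) (stdW m i) = i := by
  rw [stdW_eq_range him, LinearMap.finrank_range_of_inj, Module.finrank_fin_fun]
  intro y y' h
  funext s
  simpa [extByZero, s.2] using congrFun h ⟨s, s.2.trans_le him⟩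

lemma stdW_mono {i i' : ℕ} (h : i ≤ i') : stdW m i ≤ stdW m i' :=
  span_mono fun _ hx t ht => hx t (h.trans ht)

lemma numDim_pos {j : ℕ} (hj : j ≤ m) : 0 < numDim m j :=
  (Set.ncard_pos (Set.toFinite _)).mpr ⟨stdW m j, finrank_stdW hj⟩

lemma sum_tail_numOp (op : Subsp → Subsp → Subsp) (j κ : ℕ) (W : Subsp) :
    ∑ k : Fin (m + 1), (if κ ≤ (k : ℕ) then numOp op j k W else 0) =
      ∑ U ∈ subspacesOfFinrank j, if κ ≤ finrank (ZMod 2) (op U W) then 1 else 0 := by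
  have hU : ∀ U : Subsp, (∑ k : Fin (m + 1),
      if κ ≤ (k : ℕ) then (if finrank (ZMod 2) (op U W) = k then 1 else 0) else 0) =
        if κ ≤ finrank (ZMod 2) (op U W) then 1 else 0 := fun U => by
    have hr : finrank (ZMod 2) (op U W) < m + 1 :=
      Nat.lt_succ_of_le ((finrank_le (op U W)).trans_eq (finrank_fin_fun (ZMod 2)))
    rw [Finset.sum_eq_single ⟨_, hr⟩]
    · simp
    · intro k _ hk
      have hne : finrank (ZMod 2) (op U W) ≠ k := fun h => hk (Fin.ext h.symm)
      simp [hne]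
    · simp
  simp only [numOp_eq_sum, Finset.ite_sum_zero]
  rw [Finset.sum_comm]
  exact sum_congr rfl fun U _ => hU U

lemma numOp_mul_numDim_comm {op : Subsp → Subsp → Subsp} (hcomm : ∀ U W, op U W = op W U)
    (hmap : IsGLEquivariant op) {i j : ℕ} (hi : i ≤ m) (hj : j ≤ m) (k : ℕ) :
    numOp op j k (stdW m i) * numDim m i = numOp op i k (stdW m j) * numDim m j := by
  -- both sides count the pairs `(U, W)` with `dim U = j`, `dim W = i`, `dim (op U W) = k`
  have hpairs : ∀ {a b : ℕ}, a ≤ m →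
      numOp op b k (stdW m a) * numDim m a = ∑ W ∈ subspacesOfFinrank a, numOp op b k W := by
    intro a b ha
    rw [numDim_eq_card, mul_comm, ← smul_eq_mul, ← Finset.sum_const]
    refine Finset.sum_congr rfl fun W hW => numOp_congr hmap ?_
    rw [finrank_stdW ha, (Finset.mem_filter.mp hW).2]
  rw [hpairs hi, hpairs hj]
  simp only [numOp_eq_sum]
  rw [Finset.sum_comm]
  exact sum_congr rfl fun U _ => sum_congr rfl fun W _ => by rw [hcomm]

/-- `Vprob m` and `Cprob m` are, by definition, `opProb (· ⊓ ·)` and `opProb (· ⊔ ·)`. -/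
def opProb (op : Subsp → Subsp → Subsp) (i j k : ℕ) : ℝ := numOp op j k (stdW m i) / numDim m j

lemma tailSum_opProb (op : Subsp → Subsp → Subsp) (i j κ : ℕ) :
    tailSum m (fun k => opProb op i j k) κ =
      (∑ U ∈ subspacesOfFinrank j,
        if κ ≤ finrank (ZMod 2) (op U (stdW m i)) then 1 else 0 : ℕ) / numDim m j := by
  rw [← sum_tail_numOp, tailSum, Nat.cast_sum, Finset.sum_div]
  refine Finset.sum_congr rfl fun k _ => ?_
  split_ifs <;> simp [opProb]

lemma opProb_comm {op : Subsp → Subsp → Subsp} (hcomm : ∀ U W, op U W = op W U)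
    (hmap : IsGLEquivariant op) {i j : ℕ} (hi : i ≤ m) (hj : j ≤ m) (k : ℕ) : opProb op i j k = opProb op j i k := by
  rw [opProb, opProb, div_eq_div_iff (Nat.cast_pos.mpr (numDim_pos hj)).ne'
    (Nat.cast_pos.mpr (numDim_pos hi)).ne']
  exact_mod_cast numOp_mul_numDim_comm hcomm hmap hi hj k

lemma isMonotoneKernel_opProb {op : Subsp → Subsp → Subsp} (hcomm : ∀ U W, op U W = op W U)
    (hmono : ∀ U, Monotone (op U)) (hmap : IsGLEquivariant op) : IsMonotoneKernel m (opProb op) := by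
  have hleft : ∀ i j κ, tailSum m (fun k => opProb op i j k) κ ≤
      tailSum m (fun k => opProb op (i + 1) j k) κ := fun i j κ => by
    rw [tailSum_opProb, tailSum_opProb]
    gcongr with U
    have := finrank_mono (hmono U (stdW_mono (Nat.le_add_right i 1)))
    split_ifs <;> omega
  refine ⟨fun _ _ _ => div_nonneg (Nat.cast_nonneg _) (Nat.cast_nonneg _),
    fun i j κ _ _ => hleft i j κ, fun i j κ hi hj => ?_⟩
  simp only [opProb_comm hcomm hmap hi hj.le, opProb_comm hcomm hmap hi hj]
  exact hleft j i κ

end Counting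

section CCDF

variable {m : ℕ}

lemma extSeq_of_lt (x : Fin m → ℝ) {κ : ℕ} (hκ : m < κ) : extSeq m x κ = 0 := by
  simp [extSeq, show κ ≠ 0 by omega, show ¬ κ ≤ m by omega]

lemma extSeq_antitone {x : Fin m → ℝ} (hx0 : ∀ i, 0 ≤ x i) (hx1 : ∀ i, x i ≤ 1)
    (hxmono : ∀ i j : Fin m, i ≤ j → x j ≤ x i) : Antitone (extSeq m x) := by
  refine antitone_nat_of_succ_le fun n => ?_
  unfold extSeq
  split_ifs
  all_goals first
    | (exfalso; omega)
    | exact hx1 _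
    | exact hx0 _
    | exact hxmono _ _ (Fin.mk_le_mk.mpr (by omega))
    | norm_num

lemma tilde_nonneg {x : Fin m → ℝ} (hx0 : ∀ i, 0 ≤ x i) (hx1 : ∀ i, x i ≤ 1)
    (hxmono : ∀ i j : Fin m, i ≤ j → x j ≤ x i) : 0 ≤ tilde m x := fun k =>
  sub_nonneg.mpr (extSeq_antitone hx0 hx1 hxmono (Nat.le_succ k))

lemma tailSum_tilde (x : Fin m → ℝ) (κ : ℕ) : tailSum m (tilde m x) κ = extSeq m x κ := by
  rcases le_or_gt κ m with hκ | hκ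
  · induction hκ using Nat.decreasingInduction with
    | self => rw [tailSum_eq_add _ le_rfl, tailSum_of_lt _ (Nat.lt_succ_self m),
        tilde, extSeq_of_lt x (Nat.lt_succ_self m)]; simp
    | of_succ k hk ih => rw [tailSum_eq_add _ hk.le, ih, tilde]; simp
  · rw [tailSum_of_lt _ hκ, extSeq_of_lt x hκ]

lemma tailLE_tilde {x x' : Fin m → ℝ} (hle : ∀ i, x i ≤ x' i) :
    TailLE m (tilde m x) (tilde m x') := fun κ => by
  rw [tailSum_tilde, tailSum_tilde]
  unfold extSeq
  split_ifs <;> first | exact le_rfl | exact hle _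

end CCDF

lemma pcirc_nonneg {m : ℕ} {ε : ℝ} (hε : ε ∈ Set.Icc (0 : ℝ) 1) : 0 ≤ pcirc m ε := fun _ => by
  have := sub_nonneg.mpr hε.2
  have := hε.1
  unfold pcirc
  positivity

lemma boxdotPow_eq_kernelPow (m n : ℕ) : boxdotPow m n = kernelPow m (Vprob m) n := by
  induction n with
  | zero => rfl
  | succ n ih => funext a; simp only [boxdotPow, kernelPow, ih]; rfl

lemma boxtimesPow_eq_kernelPow (m n : ℕ) : boxtimesPow m n = kernelPow m (Cprob m) n := by
  induction n with
  | zero => rfl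
  | succ n ih => funext a; simp only [boxtimesPow, kernelPow, ih]; rfl

theorem f_g_increasing_general (m dv dc : ℕ)
    (ε : ℝ) (hε : ε ∈ Set.Icc (0:ℝ) 1)
    (x x' : Fin m → ℝ)
    (hx0 : ∀ i, 0 ≤ x i) (hx1 : ∀ i, x i ≤ 1)
    (hxmono : ∀ i j : Fin m, i ≤ j → x j ≤ x i)
    (hx'0 : ∀ i, 0 ≤ x' i) (hx'1 : ∀ i, x' i ≤ 1)
    (hx'mono : ∀ i j : Fin m, i ≤ j → x' j ≤ x' i)
    (hle : ∀ i, x i ≤ x' i) :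
    (∀ i, fFun m dv ε x i ≤ fFun m dv ε x' i) ∧
    (∀ i, gFun m dc x i ≤ gFun m dc x' i) := by
  have hV : IsMonotoneKernel m (Vprob m) :=
    isMonotoneKernel_opProb inf_comm (fun _ _ _ h => inf_le_inf_left _ h)
      fun e _ _ => (Submodule.map_inf _ e.injective).symm
  have hC : IsMonotoneKernel m (Cprob m) :=
    isMonotoneKernel_opProb sup_comm (fun _ _ _ h => sup_le_sup_left h _)
      fun _ _ _ => (Submodule.map_sup _ _ _).symm
  have hx := tilde_nonneg hx0 hx1 hxmono
  have hx' := tilde_nonneg hx'0 hx'1 hx'mono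
  have hxx' := tailLE_tilde hle
  refine ⟨fun i => ?_, fun i => ?_⟩
  · rw [fFun, fFun, fcirc, fcirc, boxdotPow_eq_kernelPow]
    exact hV.tailLE_kernelProd (pcirc_nonneg hε) (hV.kernelPow_nonneg hx' _) (TailLE.refl _)
      (hV.tailLE_kernelPow hx hx' hxx' _) (i + 1)
  · rw [gFun, gFun, gcirc, gcirc, boxtimesPow_eq_kernelPow]
    exact hC.tailLE_kernelPow hx hx' hxx' _ (i + 1)

/-- **Theorem 1.** The functions `f(·; ε)` and `g` are increasing in `x` on
the set of CCDF vectors. -/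
theorem f_g_increasing (m dv dc : ℕ) (hm : 1 ≤ m) (hdv : 2 ≤ dv) (hdc : 2 ≤ dc)
    (ε : ℝ) (hε : ε ∈ Set.Icc (0:ℝ) 1)
    (x x' : Fin m → ℝ)
    (hx0 : ∀ i, 0 ≤ x i) (hx1 : ∀ i, x i ≤ 1)
    (hxmono : ∀ i j : Fin m, i ≤ j → x j ≤ x i)
    (hx'0 : ∀ i, 0 ≤ x' i) (hx'1 : ∀ i, x' i ≤ 1)
    (hx'mono : ∀ i j : Fin m, i ≤ j → x' j ≤ x' i)
    (hle : ∀ i, x i ≤ x' i) :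
    (∀ i, fFun m dv ε x i ≤ fFun m dv ε x' i) ∧
    (∀ i, gFun m dc x i ≤ gFun m dc x' i) :=
  f_g_increasing_general m dv dc ε hε x x' hx0 hx1 hxmono hx'0 hx'1 hx'mono hle

end
end

section
/- (Theorem 2: existence of F and G.) Regard f_1(·; ε),…,f_m(·; ε) and g_1,…,g_m as real multivariate polynomials in x = (x_1,…,x_m), and for a multi-index α = (i_1,…,i_m) ∈ ℕ^m let φ^{(j)}_α(ε) and γ^{(j)}_α denote the coefficient of x_1^{i_1}⋯x_m^{i_m} in f_j(·; ε) and g_j, respectively. Suppose there exist real numbers {d_{js} : 1 ≤ j, s ≤ m} forming a symmetric matrix D with all entries positive and nonzero determinant, and families of reals {φ_α(ε)} and {μ_α} indexed by multi-indices α ∈ ℕ^m, such that for every α and every s, t ∈ {1,…,m} with α_s ≥ 1 (resp. α_t ≥ 1): α_s φ_α(ε) = Σ_{j=1}^m d_{js} φ^{(j)}_{α − e_s}(ε) and α_t μ_α = Σ_{j=1}^m d_{jt} γ^{(j)}_{α − e_t}, where e_s is the s-th standard unit multi-index. Then there exist functions F(·; ε), G : ℝ^m → ℝ with F(0; ε)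 = 0, G(0) = 0, and gradients (as row vectors) F′(y; ε) = f(y; ε)·D and G′(x) = g(x)·D; hence the potential function U(x; ε) = g(x) D xᵀ − G(x) − F(g(x); ε) exists. -/
open scoped BigOperators

noncomputable section

/-! Since the coefficient of `y^β` in `∂P/∂y_s` is `(β_s + 1)` times that of `y^{β + e_s}` in `P`,
the hypothesis on `φ` says that `P = Σ_{α ≠ 0} φ_α y^α` (a finite sum) satisfies
`∂P/∂y_s = Σ_j d_{js} f_j` for every `s`; likewise `μ` gives `Q` for `g`. Take `F` and `G` to be
the polynomial functions of `P` and `Q`: a polynomial function has the Fréchet derivative given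
by its formal partial derivatives. -/

namespace MvPolynomial

theorem hasFDerivAt_eval {𝕜 σ : Type*} [NontriviallyNormedField 𝕜] [Fintype σ]
    (p : MvPolynomial σ 𝕜) (y : σ → 𝕜) :
    HasFDerivAt (fun x => eval x p)
      (∑ s, eval y (pderiv s p) • (ContinuousLinearMap.proj s : (σ → 𝕜) →L[𝕜] 𝕜))
      y := by
  classical
  induction p using MvPolynomial.induction_on with
  | C a =>
    simp only [eval_C]
    refine (hasFDerivAt_const a y).congr_fderiv ?_
    ext v
    simp
  | add p q hp hq =>
    simp only [map_add]
    refine (hp.fun_add hq).congr_fderiv ?_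
    ext v
    simp [add_mul, Finset.sum_add_distrib]
  | mul_X p i hp =>
    refine ((hp.fun_mul (hasFDerivAt_apply i y)).congr_fderiv ?_).congr_of_eventuallyEq
      (Filter.Eventually.of_forall fun x => by simp)
    ext v
    simp [pderiv_X, Pi.single_apply, apply_ite, ite_mul, add_mul, Finset.sum_add_distrib,
      Finset.mul_sum, mul_assoc]

theorem exists_pderiv_eq {R σ : Type*} [CommSemiring R] [Fintype σ]
    (q : σ → MvPolynomial σ R) (φ : (σ →₀ ℕ) → R)
    (hφ : ∀ (α : σ →₀ ℕ) (s : σ), 1 ≤ α s →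
      (α s : R) * φ α = coeff (α - Finsupp.single s 1) (q s)) :
    ∃ P : MvPolynomial σ R, constantCoeff P = 0 ∧ ∀ s, pderiv s P = q s := by
  classical
  set T : Finset (σ →₀ ℕ) :=
    Finset.univ.biUnion fun s => (q s).support.image (· + Finsupp.single s 1)
  refine ⟨∑ α ∈ T, monomial α (φ α), ?_, fun s => ?_⟩
  · rw [map_sum]
    refine Finset.sum_eq_zero fun α hα => ?_
    obtain ⟨s, -, β, -, rfl⟩ :
        ∃ s ∈ Finset.univ, ∃ β ∈ (q s).support, β + Finsupp.single s 1 = α := by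
      simpa [T] using hα
    rw [constantCoeff_monomial, if_neg]
    exact fun h => by simpa using congrArg (· s) h
  · ext β
    rw [coeff_pderiv, coeff_sum]
    simp only [coeff_monomial, Finset.sum_ite_eq', mul_comm _ ((β s : R) + 1)]
    split_ifs with hT
    · have h := hφ (β + Finsupp.single s 1) s (by simp)
      rwa [Finsupp.add_apply, Finsupp.single_eq_same, add_tsub_cancel_right, Nat.cast_succ] at h
    · rw [mul_zero, eq_comm, ← notMem_support_iff]
      exact fun hβ => hT <|
        Finset.mem_biUnion.mpr ⟨s, Finset.mem_univ _, Finset.mem_image_of_mem _ hβ⟩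

theorem exists_potential_of_coeff_eq {𝕜 ι σ : Type*} [NontriviallyNormedField 𝕜]
    [Fintype ι] [Fintype σ] (h : ι → MvPolynomial σ 𝕜) (c : ι → σ → 𝕜)
    (φ : (σ →₀ ℕ) → 𝕜)
    (hφ : ∀ (α : σ →₀ ℕ) (s : σ), 1 ≤ α s →
      (α s : 𝕜) * φ α = ∑ j, c j s * coeff (α - Finsupp.single s 1) (h j)) :
    ∃ F : (σ → 𝕜) → 𝕜, F 0 = 0 ∧ ∀ y, HasFDerivAt F
      (∑ s, (∑ j, eval y (h j) * c j s) •
        (ContinuousLinearMap.proj s : (σ → 𝕜) →L[𝕜] 𝕜)) y := by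
  obtain ⟨P, hP0, hP⟩ := exists_pderiv_eq (fun s => ∑ j, C (c j s) * h j) φ
    fun α s hs => by simpa only [coeff_sum, coeff_C_mul] using hφ α s hs
  refine ⟨fun y => eval y P, by simpa using hP0, fun y => ?_⟩
  simpa only [hP, map_sum, eval_mul, eval_C, mul_comm (c _ _)] using hasFDerivAt_eval P y

end MvPolynomial

theorem existence_of_F_and_G_general (m dv dc : ℕ)
    (ε : ℝ)
    (fp gp : Fin m → MvPolynomial (Fin m) ℝ)
    (hfp : ∀ (j : Fin m) (y : Fin m → ℝ), MvPolynomial.eval y (fp j) = fFun m dv ε y j)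
    (hgp : ∀ (j : Fin m) (x : Fin m → ℝ), MvPolynomial.eval x (gp j) = gFun m dc x j)
    (D : Matrix (Fin m) (Fin m) ℝ)
    (φ μ : (Fin m →₀ ℕ) → ℝ)
    (hφ : ∀ (α : Fin m →₀ ℕ) (s : Fin m), 1 ≤ α s →
      (α s : ℝ) * φ α = ∑ j : Fin m, D j s * MvPolynomial.coeff (α - Finsupp.single s 1) (fp j))
    (hμ : ∀ (α : Fin m →₀ ℕ) (t : Fin m), 1 ≤ α t →
      (α t : ℝ) * μ α = ∑ j : Fin m, D j t * MvPolynomial.coeff (α - Finsupp.single t 1) (gp j)) :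
    ∃ F G : (Fin m → ℝ) → ℝ, F 0 = 0 ∧ G 0 = 0 ∧
      (∀ y : Fin m → ℝ,
        HasFDerivAt F (rowDeriv m (fun s => ∑ j : Fin m, fFun m dv ε y j * D j s)) y) ∧
      (∀ x : Fin m → ℝ,
        HasFDerivAt G (rowDeriv m (fun s => ∑ j : Fin m, gFun m dc x j * D j s)) x) := by
  obtain ⟨F, hF0, hF⟩ := MvPolynomial.exists_potential_of_coeff_eq fp D φ hφ
  obtain ⟨G, hG0, hG⟩ := MvPolynomial.exists_potential_of_coeff_eq gp D μ hμ
  refine ⟨F, G, hF0, hG0, fun y => ?_, fun x => ?_⟩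
  · simpa only [rowDeriv, hfp] using hF y
  · simpa only [rowDeriv, hgp] using hG x

/-- **Theorem 2: existence of `F` and `G`.** If the linear system relating
the coefficients of candidate antiderivatives to the polynomial coefficients of `f` and `g`
through `D` has a solution, then `F` and `G` (and hence the potential `U`) exist. -/
theorem existence_of_F_and_G (m dv dc : ℕ) (hm : 1 ≤ m) (hdv : 2 ≤ dv) (hdc : 2 ≤ dc)
    (ε : ℝ) (hε : ε ∈ Set.Icc (0:ℝ) 1)
    (fp gp : Fin m → MvPolynomial (Fin m) ℝ)
    (hfp : ∀ (j : Fin m) (y : Fin m → ℝ), MvPolynomial.eval y (fp j) = fFun m dv ε y j)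
    (hgp : ∀ (j : Fin m) (x : Fin m → ℝ), MvPolynomial.eval x (gp j) = gFun m dc x j)
    (D : Matrix (Fin m) (Fin m) ℝ) (hDsymm : D.IsSymm) (hDpos : ∀ a b, 0 < D a b)
    (hDdet : D.det ≠ 0)
    (φ μ : (Fin m →₀ ℕ) → ℝ)
    (hφ : ∀ (α : Fin m →₀ ℕ) (s : Fin m), 1 ≤ α s →
      (α s : ℝ) * φ α = ∑ j : Fin m, D j s * MvPolynomial.coeff (α - Finsupp.single s 1) (fp j))
    (hμ : ∀ (α : Fin m →₀ ℕ) (t : Fin m), 1 ≤ α t →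
      (α t : ℝ) * μ α = ∑ j : Fin m, D j t * MvPolynomial.coeff (α - Finsupp.single t 1) (gp j)) :
    ∃ F G : (Fin m → ℝ) → ℝ, F 0 = 0 ∧ G 0 = 0 ∧
      (∀ y : Fin m → ℝ,
        HasFDerivAt F (rowDeriv m (fun s => ∑ j : Fin m, fFun m dv ε y j * D j s)) y) ∧
      (∀ x : Fin m → ℝ,
        HasFDerivAt G (rowDeriv m (fun s => ∑ j : Fin m, gFun m dc x j * D j s)) x) :=
  existence_of_F_and_G_general m dv dc ε fp gp hfp hgp D φ μ hφ hμ

end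
end
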